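/- arXiv:2101.06718 — 2 statements merged into one kernel-verified Lean document; each statement's English description precedes it below -/
import Mathlib

section
/- Let A ∈ ℝ^{n×n}, B ∈ ℝ^{n×m}. Suppose there exist X ∈ ℝ^{n×n}, a symmetric positive definite P, and R ∈ ℝ^{m×n} such that [[0,P],[P,0]] + He([[AX+BR, AX+BR],[-X, -X]]) ≺ 0. Then X is invertible and A + B(RX⁻¹) is Hurwitz. -/
open Matrix

/-- A real square matrix is Hurwitz if every complex eigenvalue has negative real part. -/
def Hurwitz {n : ℕ} (M : Matrix (Fin n) (Fin n) ℝ) : Prop :=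
  ∀ z ∈ spectrum ℂ (M.map (Complex.ofReal)), z.re < 0

/-- `He N = N + Nᵀ`. -/
def He {n : ℕ} (N : Matrix (Fin n ⊕ Fin n) (Fin n ⊕ Fin n) ℝ) :
    Matrix (Fin n ⊕ Fin n) (Fin n ⊕ Fin n) ℝ := N + Nᵀ

/-!
The lower-right block of the LMI is `X + Xᵀ ≻ 0`, which forces `X` to be invertible. Then
`A X + B R = K X` with `K = A + B R X⁻¹`, and the congruence of the LMI by `[I; Kᵀ]` is the
Lyapunov inequality `K P + P Kᵀ ≺ 0`. If `Kᵀ v = z v` with `v ≠ 0`, then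
`v* (K P + P Kᵀ) v = 2 (Re z) v* P v`, so `Re z < 0`; and `Kᵀ` has the same spectrum as `K`.
-/

open scoped ComplexOrder

namespace Matrix

variable {n K : Type*} [Fintype n] [DecidableEq n]

theorem isUnit_det_of_posDef_add_conjTranspose [Field K] [PartialOrder K] [StarRing K]
    {X : Matrix n n K} (hX : (X + Xᴴ).PosDef) : IsUnit X.det := by
  rw [isUnit_iff_ne_zero]
  intro hdet
  obtain ⟨v, hv0, hv⟩ := exists_mulVec_eq_zero_iff.mpr hdet
  have h := hX.dotProduct_mulVec_pos hv0
  rw [add_mulVec, dotProduct_add, hv, dotProduct_zero, zero_add, dotProduct_mulVec,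
    ← star_mulVec, hv, star_zero, zero_dotProduct] at h
  exact h.false

theorem fromRows_one_mulVec_injective {m R : Type*} [Semiring R] (F : Matrix m n R) :
    Function.Injective (fromRows (1 : Matrix n n R) F).mulVec := by
  intro v w h
  simpa [fromRows_mulVec] using congrArg (· ∘ Sum.inl) h

theorem spectrum_transpose [Field K] (A : Matrix n n K) : spectrum K Aᵀ = spectrum K A := by
  ext z
  simp only [mem_spectrum_iff_isRoot_charpoly, charpoly_transpose]

theorem exists_mulVec_eq_smul_of_mem_spectrum [Field K] {A : Matrix n n K} {z : K}
    (hz : z ∈ spectrum K A) : ∃ v ≠ 0, A *ᵥ v = z • v := by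
  rw [← spectrum_toLin', ← Module.End.hasEigenvalue_iff_mem_spectrum] at hz
  obtain ⟨v, hv, hv0⟩ := hz.exists_hasEigenvector
  exact ⟨v, hv0, by simpa using Module.End.mem_eigenspace_iff.mp hv⟩

open scoped MatrixOrder in
theorem PosDef.map_ofReal {M : Matrix n n ℝ} (hM : M.PosDef) :
    (M.map Complex.ofReal).PosDef := by
  obtain ⟨Y, hY, rfl⟩ :=
    CStarAlgebra.isStrictlyPositive_iff_eq_star_mul_self.mp hM.isStrictlyPositive
  have hY' : IsUnit (Y.map Complex.ofReal) := hY.map Complex.ofRealHom.mapMatrix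
  have h : (star Y * Y).map Complex.ofReal = (Y.map Complex.ofReal)ᴴ * Y.map Complex.ofReal := by
    rw [star_eq_conjTranspose, ← conjTranspose_map _ fun _ => (Complex.conj_ofReal _).symm]
    exact Matrix.map_mul (f := Complex.ofRealHom)
  rw [h]
  exact PosDef.conjTranspose_mul_self _ (mulVec_injective_iff_isUnit.mpr hY')

theorem re_neg_of_mem_spectrum_of_lyapunov {A P : Matrix n n ℂ} (hP : P.PosDef)
    (hQ : (-(Aᴴ * P + P * A)).PosDef) {z : ℂ} (hz : z ∈ spectrum ℂ A) : z.re < 0 := by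
  obtain ⟨v, hv0, hAv⟩ := exists_mulVec_eq_smul_of_mem_spectrum hz
  have hquad : star v ⬝ᵥ ((Aᴴ * P + P * A) *ᵥ v) =
      (starRingEnd ℂ z + z) * (star v ⬝ᵥ (P *ᵥ v)) := by
    rw [add_mulVec, ← mulVec_mulVec, ← mulVec_mulVec, dotProduct_add, dotProduct_mulVec,
      ← star_mulVec, hAv, star_smul, smul_dotProduct, mulVec_smul, dotProduct_smul]
    simp only [smul_eq_mul, Complex.star_def]
    ring
  have hq := hQ.re_dotProduct_pos hv0
  have hp := hP.re_dotProduct_pos hv0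
  rw [neg_mulVec, dotProduct_neg, hquad] at hq
  simp only [RCLike.re_to_complex, Complex.neg_re, Complex.mul_re, Complex.add_re,
    Complex.conj_re, Complex.add_im, Complex.conj_im, neg_add_cancel, zero_mul, sub_zero,
    Left.neg_pos_iff] at hq hp
  nlinarith

end Matrix

theorem hurwitz_of_posDef_lyapunov {n : ℕ} {A P : Matrix (Fin n) (Fin n) ℝ} (hP : P.PosDef)
    (hQ : (-(A * P + P * Aᵀ)).PosDef) : Hurwitz A := by
  intro z hz
  rw [← spectrum_transpose, ← transpose_map] at hz
  refine re_neg_of_mem_spectrum_of_lyapunov hP.map_ofReal ?_ hz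
  rw [← conjTranspose_map _ fun _ => (Complex.conj_ofReal _).symm,
    conjTranspose_eq_transpose_of_trivial, transpose_transpose]
  have h : (Complex.ofRealHom.mapMatrix (-(A * P + P * Aᵀ))).PosDef := hQ.map_ofReal
  rwa [map_neg, map_add, map_mul, map_mul] at h

def dilatedLMI {n : ℕ} (S X P : Matrix (Fin n) (Fin n) ℝ) :
    Matrix (Fin n ⊕ Fin n) (Fin n ⊕ Fin n) ℝ :=
  -(fromBlocks 0 P P 0 + He (fromBlocks S S (-X) (-X)))

theorem dilatedLMI_submatrix_inr {n : ℕ} (S X P : Matrix (Fin n) (Fin n) ℝ) :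
    (dilatedLMI S X P).submatrix Sum.inr Sum.inr = X + Xᵀ := by
  ext i j
  simp [dilatedLMI, He, add_comm]

theorem dilatedLMI_congr {n : ℕ} (K X P : Matrix (Fin n) (Fin n) ℝ) :
    (fromRows (1 : Matrix (Fin n) (Fin n) ℝ) Kᵀ)ᴴ * dilatedLMI (K * X) X P *
      fromRows (1 : Matrix (Fin n) (Fin n) ℝ) Kᵀ = -(K * P + P * Kᵀ) := by
  simp only [conjTranspose_eq_transpose_of_trivial, dilatedLMI, He, fromBlocks_transpose,
    fromBlocks_add, fromBlocks_neg, transpose_fromRows, transpose_one, transpose_transpose,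
    transpose_neg, transpose_mul]
  rw [fromCols_mul_fromBlocks, fromCols_mul_fromRows]
  noncomm_ring

theorem stmt7 {n m : ℕ} (A : Matrix (Fin n) (Fin n) ℝ) (B : Matrix (Fin n) (Fin m) ℝ)
    (X P : Matrix (Fin n) (Fin n) ℝ) (R : Matrix (Fin m) (Fin n) ℝ)
    (hP : P.PosDef)
    (hLMI : (-(Matrix.fromBlocks 0 P P 0 +
        He (Matrix.fromBlocks (A * X + B * R) (A * X + B * R) (-X) (-X)))).PosDef) :
    IsUnit X.det ∧ Hurwitz (A + B * (R * X⁻¹)) := by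
  change (dilatedLMI (A * X + B * R) X P).PosDef at hLMI
  have hX : IsUnit X.det := isUnit_det_of_posDef_add_conjTranspose <| by
    simpa only [conjTranspose_eq_transpose_of_trivial, dilatedLMI_submatrix_inr] using
      hLMI.submatrix Sum.inr_injective
  refine ⟨hX, hurwitz_of_posDef_lyapunov hP ?_⟩
  have hKX : (A + B * (R * X⁻¹)) * X = A * X + B * R := by
    rw [add_mul, Matrix.mul_assoc, Matrix.mul_assoc, nonsing_inv_mul X hX, Matrix.mul_one]
  rw [← dilatedLMI_congr _ X P, hKX]
  exact hLMI.conjTranspose_mul_mul_same (fromRows_one_mulVec_injective _)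
end

section
/- Let B ∈ ℝ^{3×2} be the matrix with rows (1,0), (0,1), (1,1), and let Υ be the structure set of the subspace S = {[[a,0,b],[0,c,d]] : a,b,c,d ∈ ℝ}. Then every Q ∈ Υ satisfies q₁₂ = q₂₁ = q₃₁ = q₃₂ = 0, i.e., Q has the form [[q₁₁,0,q₁₃],[0,q₂₂,q₂₃],[0,0,q₃₃]]. -/
open Matrix Kronecker

/-!
Read entrywise, `L (I ⊗ Q) = L (Λ ⊗ I)` says that for every basis matrix `S k` and every
entry `(i, c)`, `(S k * Q) i c = ∑ j, Λ j k * S j i c`. Where the `(i, c)` entry vanishes in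
the whole basis of `S`, the right-hand side is `0`, which forces `(S k * Q) i c = 0`; for the
basis `E₁₁, E₁₃, E₂₂, E₂₃` this kills exactly `q₁₂, q₃₂, q₂₁, q₃₁`.
-/

namespace Matrix

variable {ι m n R : Type*} [Fintype ι] [Fintype n] [CommSemiring R]

/-- The block row `L = [S₁ | ⋯ | Sₖ]` of the structure set. -/
def hconcat (S : ι → Matrix m n R) : Matrix m (ι × n) R :=
  of fun i p => S p.1 i p.2

theorem hconcat_mul_one_kronecker_apply [DecidableEq ι] (S : ι → Matrix m n R)
    (Q : Matrix n n R) (i : m) (k : ι) (c : n) :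
    (hconcat S * ((1 : Matrix ι ι R) ⊗ₖ Q)) i (k, c) = (S k * Q) i c := by
  simp [hconcat, mul_apply, Fintype.sum_prod_type, one_apply]

theorem hconcat_mul_kronecker_one_apply [DecidableEq n] (S : ι → Matrix m n R)
    (Λ : Matrix ι ι R) (i : m) (k : ι) (c : n) :
    (hconcat S * (Λ ⊗ₖ (1 : Matrix n n R))) i (k, c) = ∑ j, Λ j k * S j i c := by
  simp [hconcat, mul_apply, Fintype.sum_prod_type, one_apply, mul_comm]

theorem mul_apply_eq_zero_of_hconcat_mul_kronecker_eq [DecidableEq ι] [DecidableEq n]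
    {S : ι → Matrix m n R} {Q : Matrix n n R} {Λ : Matrix ι ι R}
    (h : hconcat S * ((1 : Matrix ι ι R) ⊗ₖ Q) = hconcat S * (Λ ⊗ₖ (1 : Matrix n n R)))
    {i : m} {c : n} (hzero : ∀ j, S j i c = 0) (k : ι) :
    (S k * Q) i c = 0 := by
  have hentry := congrFun (congrFun h i) (k, c)
  rw [hconcat_mul_one_kronecker_apply, hconcat_mul_kronecker_one_apply] at hentry
  simp [hentry, hzero]

end Matrix

theorem stmt11
    (S : Fin 4 → Matrix (Fin 2) (Fin 3) ℝ)
    (hS : S = ![!![1,0,0;0,0,0], !![0,0,1;0,0,0], !![0,0,0;0,1,0], !![0,0,0;0,0,1]])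
    (L : Matrix (Fin 2) (Fin 4 × Fin 3) ℝ)
    (hL : L = Matrix.of fun i p => S p.1 i p.2)
    (Q : Matrix (Fin 3) (Fin 3) ℝ)
    (hQ : ∃ Λ : Matrix (Fin 4) (Fin 4) ℝ, IsUnit Λ.det ∧
        L * ((1 : Matrix (Fin 4) (Fin 4) ℝ) ⊗ₖ Q) =
        L * (Λ ⊗ₖ (1 : Matrix (Fin 3) (Fin 3) ℝ))) :
    Q 0 1 = 0 ∧ Q 1 0 = 0 ∧ Q 2 0 = 0 ∧ Q 2 1 = 0 := by
  obtain ⟨Λ, -, heq⟩ := hQ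
  subst hS hL
  have hrow0 := mul_apply_eq_zero_of_hconcat_mul_kronecker_eq heq (i := 0) (c := 1)
    (by simp [Fin.forall_fin_succ])
  have hrow1 := mul_apply_eq_zero_of_hconcat_mul_kronecker_eq heq (i := 1) (c := 0)
    (by simp [Fin.forall_fin_succ])
  refine ⟨?_, ?_, ?_, ?_⟩
  · simpa [mul_apply, Fin.sum_univ_succ] using hrow0 0
  · simpa [mul_apply, Fin.sum_univ_succ] using hrow1 2
  · simpa [mul_apply, Fin.sum_univ_succ] using hrow1 3
  · simpa [mul_apply, Fin.sum_univ_succ] using hrow0 1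
end
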